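/- arXiv:math/0611012 — 3 statements merged into one kernel-verified Lean document; each statement's English description precedes it below -/
import Mathlib

section
/- For every s ≥ k ≥ 0, the coefficient of x^{s-k} in the Maclaurin expansion of (1/√(1−4x))·((1−√(1−4x))/(2x))^{k−1} equals C(2s−k, s−k) − C(2s−k−1, s−k−1), where C(·,·) denotes binomial coefficients. -/
/-!
The Catalan equation `g = 1 + x g²` gives `f gᵐ⁺¹ = f gᵐ + x · f gᵐ⁺²`, so the coefficients
`a(n, m) = [xⁿ] f gᵐ` satisfy Pascal's recurrence `a(n+1, m+1) = a(n+1, m) + a(n, m+2)`, with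
boundary values `a(n, 0) = C(2n, n)` and `a(0, m) = 1`. Hence `a(n, m) = C(2n+m, n)`, and the
claimed difference is one more application of Pascal's rule together with the symmetry of `C`.
-/

open PowerSeries

/-- `f(x) = 1/√(1−4x) = Σ C(2n,n) xⁿ`, the generating function of central
binomial coefficients. -/
noncomputable def f : PowerSeries ℚ := PowerSeries.mk fun n => (Nat.choose (2 * n) n : ℚ)

/-- `g(x) = (1−√(1−4x))/(2x) = Σ Cₙ xⁿ`, the generating function of Catalan numbers. -/
noncomputable def g : PowerSeries ℚ := PowerSeries.mk fun n => (catalan n : ℚ)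

lemma g_eq_one_add_X_mul_sq : g = 1 + X * g ^ 2 := by
  ext n
  cases n with
  | zero => simp [g]
  | succ n =>
    rw [map_add, coeff_succ_X_mul, sq, coeff_mul]
    simp [g, catalan_succ' n, coeff_one]

lemma mul_g_pow_succ (h : PowerSeries ℚ) (m : ℕ) :
    h * g ^ (m + 1) = h * g ^ m + X * (h * g ^ (m + 2)) := by
  linear_combination (h * g ^ m) * g_eq_one_add_X_mul_sq

lemma coeff_f_mul_g_pow (n m : ℕ) :
    coeff n (f * g ^ m) = ((2 * n + m).choose n : ℚ) := by
  induction n generalizing m with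
  | zero => simp [coeff_zero_eq_constantCoeff, f, g]
  | succ n ihn =>
    induction m with
    | zero => simp [f]
    | succ m ihm =>
      have pascal : (2 * (n + 1) + (m + 1)).choose (n + 1) =
          (2 * (n + 1) + m).choose (n + 1) + (2 * n + (m + 2)).choose n := by
        rw [show 2 * (n + 1) + (m + 1) = (2 * n + m + 2) + 1 by ring, Nat.choose_succ_succ',
          show 2 * (n + 1) + m = 2 * n + m + 2 by ring, show 2 * n + (m + 2) = 2 * n + m + 2 by ring,
          add_comm]
      rw [mul_g_pow_succ, map_add, coeff_succ_X_mul, ihm, ihn, pascal]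
      push_cast
      ring

lemma Nat.choose_succ_eq_add_choose_sub {n t : ℕ} (ht : t ≤ n + 1) :
    (n + 1).choose t = n.choose t + n.choose (n + 1 - t) := by
  cases t with
  | zero => simp
  | succ t =>
    rw [Nat.choose_succ_succ', add_comm, Nat.choose_symm_of_eq_add (by omega : n = t + (n - t)),
      Nat.add_sub_add_right]

/-- For `s ≥ k ≥ 1`, the coefficient of `x^{s−k}` in `f(x)·g(x)^{k−1}` equals
`C(2s−k, s−k) − C(2s−k−1, s−k−1)`.  (Here the subtracted term is written in the
symmetric form `C(2s−k−1, s)`, which also encodes the convention `C(·,−1) = 0`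
in the case `s = k`.) -/
theorem stmt4 (s k : ℕ) (hk : 1 ≤ k) (hks : k ≤ s) :
    PowerSeries.coeff (R := ℚ) (s - k) (f * g ^ (k - 1)) =
      (Nat.choose (2 * s - k) (s - k) : ℚ) - (Nat.choose (2 * s - k - 1) s : ℚ) := by
  have hn : 2 * (s - k) + (k - 1) = 2 * s - k - 1 := by omega
  have hsucc : 2 * s - k = 2 * s - k - 1 + 1 := by omega
  have hsub : 2 * s - k - 1 + 1 - (s - k) = s := by omega
  rw [coeff_f_mul_g_pow, hn, hsucc, Nat.choose_succ_eq_add_choose_sub (by omega), hsub]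
  push_cast
  ring
end

section
/- Let R = ℤ[X_1,…,X_n] and let R₁ be the ideal generated by: X_i² for all i; X_I = Π_{i∈I} X_i for all subsets I of {1,…,n} with |I| = (n−m)/2 + 1; and e_k(I) = Σ_{J⊆I, |J|=k} X_J for all subsets I and integers k with k + |I| = n + 1. Then the quotient ring R/R₁ is a free ℤ-module of rank C(n, (n−m)/2), where n ≡ m (mod 2) and 0 ≤ m ≤ n. -/
open MvPolynomial

/-- The de Concini–Procesi ideal `R₁ ⊆ ℤ[X_1,…,X_n]`: generated by the `X_i²`,
the squarefree monomials `X_I` with `|I| = (n−m)/2 + 1`, and the elementary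
symmetric sums `e_k(I) = Σ_{J⊆I, |J|=k} X_J` with `k + |I| = n + 1`. -/
noncomputable def springerIdeal (n m : ℕ) : Ideal (MvPolynomial (Fin n) ℤ) :=
  Ideal.span
    ({p | ∃ i : Fin n, p = X i ^ 2} ∪
     {p | ∃ I : Finset (Fin n), I.card = (n - m) / 2 + 1 ∧ p = ∏ i ∈ I, X i} ∪
     {p | ∃ (I : Finset (Fin n)) (k : ℕ), k + I.card = n + 1 ∧
        p = ∑ J ∈ I.powersetCard k, ∏ i ∈ J, X i})

/-!
Modulo the ideal every monomial is a `ℤ`-combination of squarefree monomials `X_S` with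
`#S ≤ d = (n - m) / 2` whose index set (0-indexed) satisfies the ballot condition
`2 * #{i ∈ S | i ≤ t} ≤ t + 1` for all `t ∈ S`: a violation at `t` is straightened with a
generator `e_k(I)`, which trades `X_S` for monomials of larger weight `∑ i ∈ S, i`.

Conversely, by Hall's theorem a ballot set `B` has an injection `pa : B → Bᶜ` with `pa b < b`.
Reading off coefficients against `∏ b ∈ B, (X b - X (pa b)) = ∑ K ⊆ B, (-1)^#K X_{pa K ∪ (B \ K)}`
gives a linear form that kills the ideal, takes the value `1` on `X_B`, and is nonzero on another
ballot monomial only if that monomial has smaller weight. This triangularity makes the ballot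
monomials a basis, and a Pascal recursion counts `C(n, d)` ballot sets of size at most `d`.
-/

open Finset

namespace Springer

lemma linearIndependent_of_triangular {ι R M : Type*} [Ring R] [AddCommGroup M] [Module R M]
    {v : ι → M} (f : ι → M →ₗ[R] R) (w : ι → ℕ) (hdiag : ∀ i, f i (v i) = 1)
    (hoff : ∀ i j, j ≠ i → f i (v j) ≠ 0 → w j < w i) : LinearIndependent R v := by
  classical
  refine linearIndependent_iff.2 fun l hl => ?_
  by_contra hne
  obtain ⟨i, hi, hmin⟩ := l.support.exists_min_image w (Finsupp.support_nonempty_iff.2 hne)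
  have hfi : f i (Finsupp.linearCombination R v l) = l i := by
    rw [Finsupp.linearCombination_apply, Finsupp.sum, map_sum, sum_eq_single_of_mem i hi]
    · rw [map_smul, hdiag, smul_eq_mul, mul_one]
    · intro j hj hji
      rw [map_smul, smul_eq_mul]
      by_contra h
      exact absurd (hoff i j hji (right_ne_zero_of_mul h)) (not_lt.2 (hmin j hj))
  rw [hl, map_zero] at hfi
  exact Finsupp.mem_support_iff.1 hi hfi.symm

lemma map_eq_zero_of_mem_span {A M F : Type*} [CommSemiring A] [AddCommMonoid M] [FunLike F A M]
    [AddMonoidHomClass F A M] (f : F) {s : Set A} (hs : ∀ p ∈ s, ∀ g, f (g * p) = 0) {p : A}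
    (hp : p ∈ Ideal.span s) : f p = 0 := by
  suffices ∀ g, f (g * p) = 0 by simpa using this 1
  induction hp using Submodule.span_induction with
  | mem x hx => exact hs x hx
  | zero => simp
  | add x y _ _ hx hy => exact fun g => by rw [mul_add, map_add, hx, hy, add_zero]
  | smul a x _ hx => exact fun g => by rw [smul_eq_mul, ← mul_assoc, hx]

noncomputable def quotientLift {A M : Type*} [CommRing A] [AddCommGroup M] [Module ℤ M]
    (I : Ideal A) (f : A →ₗ[ℤ] M) (hf : ∀ p ∈ I, f p = 0) : (A ⧸ I) →ₗ[ℤ] M :=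
  (Submodule.liftQ (I.restrictScalars ℤ) f fun p hp => hf p hp).comp
    (Submodule.Quotient.restrictScalarsEquiv ℤ I).symm.toLinearMap

lemma quotientLift_mk {A M : Type*} [CommRing A] [AddCommGroup M] [Module ℤ M] (I : Ideal A)
    (f : A →ₗ[ℤ] M) (hf : ∀ p ∈ I, f p = 0) (p : A) :
    quotientLift I f hf (Ideal.Quotient.mk I p) = f p :=
  rfl

section Squarefree

variable {σ : Type*}

noncomputable def sqfreeExp (S : Finset σ) : σ →₀ ℕ := ∑ i ∈ S, Finsupp.single i 1

lemma prod_X_eq_monomial {R : Type*} [CommSemiring R] (S : Finset σ) :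
    ∏ i ∈ S, (X i : MvPolynomial σ R) = monomial (sqfreeExp S) 1 := by
  rw [sqfreeExp, monomial_sum_one]
  rfl

variable [DecidableEq σ]

lemma sqfreeExp_apply (S : Finset σ) (i : σ) : sqfreeExp S i = if i ∈ S then 1 else 0 := by
  simp [sqfreeExp, Finsupp.finsetSum_apply, Finsupp.single_apply]

lemma sqfreeExp_le_one (S : Finset σ) (i : σ) : sqfreeExp S i ≤ 1 := by
  rw [sqfreeExp_apply]; split_ifs <;> simp

lemma sqfreeExp_le_sqfreeExp {S T : Finset σ} : sqfreeExp S ≤ sqfreeExp T ↔ S ⊆ T := by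
  refine ⟨fun h i hi => ?_, fun h i => ?_⟩
  · have := h i
    simp only [sqfreeExp_apply, hi, if_true] at this
    by_contra hT
    simp [hT] at this
  · simp only [sqfreeExp_apply]
    split_ifs with hS hT
    exacts [le_rfl, absurd (h hS) hT, zero_le, le_rfl]

lemma sqfreeExp_injective : Function.Injective (sqfreeExp (σ := σ)) := fun _ _ h =>
  (sqfreeExp_le_sqfreeExp.1 h.le).antisymm (sqfreeExp_le_sqfreeExp.1 h.ge)

lemma sqfreeExp_sdiff {S T : Finset σ} (h : T ⊆ S) :
    sqfreeExp (S \ T) = sqfreeExp S - sqfreeExp T := by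
  ext i
  simp only [Finsupp.tsub_apply, sqfreeExp_apply, mem_sdiff]
  by_cases hT : i ∈ T
  · simp [hT, h hT]
  · simp [hT]

lemma eq_sqfreeExp_support {α : σ →₀ ℕ} (h : ∀ i, α i ≤ 1) : α = sqfreeExp α.support := by
  ext i
  have := h i
  by_cases hi : α i = 0
  · simp [sqfreeExp_apply, hi]
  · simp [sqfreeExp_apply, hi]; omega

variable {R : Type*} [CommSemiring R]

lemma coeff_sqfreeExp_prod_X_mul (S T : Finset σ) (q : MvPolynomial σ R) :
    coeff (sqfreeExp S) ((∏ i ∈ T, X i) * q) =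
      if T ⊆ S then coeff (sqfreeExp (S \ T)) q else 0 := by
  rw [prod_X_eq_monomial, coeff_monomial_mul', one_mul]
  simp only [sqfreeExp_le_sqfreeExp]
  split_ifs with h
  · rw [sqfreeExp_sdiff h]
  · rfl

lemma coeff_sqfreeExp_sum_prod_X (U : Finset σ) (F : Finset (Finset σ)) :
    coeff (sqfreeExp U) (∑ J ∈ F, ∏ i ∈ J, (X i : MvPolynomial σ R)) =
      if U ∈ F then 1 else 0 := by
  simp only [coeff_sum, prod_X_eq_monomial, coeff_monomial, sqfreeExp_injective.eq_iff]
  rw [sum_ite_eq']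

lemma monomial_eq_smul_prod_X_or_eq_X_sq_mul (α : σ →₀ ℕ) (c : R) :
    (∃ S : Finset σ, monomial α c = c • ∏ i ∈ S, X i) ∨ ∃ i q, monomial α c = X i ^ 2 * q := by
  by_cases h : ∀ i, α i ≤ 1
  · refine .inl ⟨α.support, ?_⟩
    rw [prod_X_eq_monomial, ← eq_sqfreeExp_support h, smul_monomial, smul_eq_mul, mul_one]
  · push Not at h
    obtain ⟨i, hi⟩ := h
    refine .inr ⟨i, monomial (α - Finsupp.single i 2) c, ?_⟩
    rw [X_pow_eq_monomial, monomial_mul, one_mul,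
      add_tsub_cancel_of_le (Finsupp.single_le_iff.2 hi)]

lemma prod_X_mul_prod_X_eq_X_sq_mul {S T : Finset σ} (h : ¬Disjoint S T) :
    ∃ i q, (∏ i ∈ S, X i) * ∏ i ∈ T, (X i : MvPolynomial σ R) = X i ^ 2 * q := by
  obtain ⟨i, hiS, hiT⟩ := not_disjoint_iff.1 h
  refine ⟨i, (∏ j ∈ S.erase i, X j) * ∏ j ∈ T.erase i, X j, ?_⟩
  rw [← mul_prod_erase S X hiS, ← mul_prod_erase T X hiT]
  ring

lemma mem_of_prod_X_mem {N : Submodule R (MvPolynomial σ R)} (hsq : ∀ i q, X i ^ 2 * q ∈ N)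
    (hprod : ∀ S : Finset σ, ∏ i ∈ S, X i ∈ N) (p : MvPolynomial σ R) : p ∈ N := by
  induction p using MvPolynomial.induction_on' with
  | add p q hp hq => exact N.add_mem hp hq
  | monomial α c =>
    rcases monomial_eq_smul_prod_X_or_eq_X_sq_mul α c with ⟨S, hS⟩ | ⟨i, q, hq⟩
    · exact hS ▸ N.smul_mem c (hprod S)
    · exact hq ▸ hsq i q

lemma map_mul_eq_zero_of_prod_X_mul {M : Type*} [AddCommMonoid M] [Module R M]
    (f : MvPolynomial σ R →ₗ[R] M) (hsq : ∀ i q, f (X i ^ 2 * q) = 0) {p : MvPolynomial σ R}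
    (hp : ∀ T : Finset σ, f ((∏ i ∈ T, X i) * p) = 0) (g : MvPolynomial σ R) : f (g * p) = 0 := by
  induction g using MvPolynomial.induction_on' with
  | add g₁ g₂ h₁ h₂ => rw [add_mul, map_add, h₁, h₂, add_zero]
  | monomial α c =>
    rcases monomial_eq_smul_prod_X_or_eq_X_sq_mul α c with ⟨S, hS⟩ | ⟨i, q, hq⟩
    · rw [hS, smul_mul_assoc, map_smul, hp, smul_zero]
    · rw [hq, mul_assoc, hsq]

end Squarefree

section PairingFunctional

variable {σ : Type*} [DecidableEq σ]

lemma sum_powerset_eq_zero_of_insert_eq_neg {β : Type*} [AddCommGroup β] {B : Finset σ} {b : σ}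
    (hb : b ∈ B) (f : Finset σ → β) (hf : ∀ K ⊆ B.erase b, f (insert b K) = -f K) :
    ∑ K ∈ B.powerset, f K = 0 := by
  rw [← insert_erase hb, sum_powerset_insert (notMem_erase b B), ← sum_add_distrib]
  exact sum_eq_zero fun K hK => by rw [hf K (mem_powerset.1 hK), add_neg_cancel]

lemma insert_erase_sdiff_mem_powersetCard_iff {S T I : Finset σ} {k : ℕ} {a a' : σ}
    (ha : a ∈ S) (ha' : a' ∉ S) (haI : a ∈ I) (ha'I : a' ∈ I) (haT : a ∉ T) (ha'T : a' ∉ T) :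
    (T ⊆ insert a' (S.erase a) ∧ insert a' (S.erase a) \ T ∈ I.powersetCard k) ↔
      (T ⊆ S ∧ S \ T ∈ I.powersetCard k) := by
  have hsdiff : insert a' (S.erase a) \ T = insert a' ((S \ T).erase a) := by
    rw [insert_sdiff_of_notMem _ ha'T, erase_sdiff_comm]
  have haST : a ∈ S \ T := mem_sdiff.2 ⟨ha, haT⟩
  have hT : T ⊆ insert a' (S.erase a) ↔ T ⊆ S := by
    refine ⟨fun h x hx => ?_, fun h x hx => ?_⟩
    · rcases mem_insert.1 (h hx) with rfl | hx'
      · exact absurd hx ha'T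
      · exact mem_of_mem_erase hx'
    · exact mem_insert_of_mem (mem_erase.2 ⟨fun h => haT (h ▸ hx), h hx⟩)
  have ha'ST : a' ∉ (S \ T).erase a := fun h => ha' (mem_sdiff.1 (mem_of_mem_erase h)).1
  rw [hT, hsdiff, mem_powersetCard, mem_powersetCard, insert_subset_iff,
    erase_subset_iff_of_mem haI, card_insert_of_notMem ha'ST, card_erase_of_mem haST,
    Nat.sub_add_cancel (card_pos.2 ⟨a, haST⟩)]
  simp [ha'I]

variable (B : Finset σ) (pa : σ → σ)

def swapSet (K : Finset σ) : Finset σ := K.image pa ∪ (B \ K)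

noncomputable def pairingFunctional : MvPolynomial σ ℤ →ₗ[ℤ] ℤ :=
  ∑ K ∈ B.powerset, (-1 : ℤ) ^ #K • lcoeff ℤ (sqfreeExp (swapSet B pa K))

lemma pairingFunctional_apply (p : MvPolynomial σ ℤ) :
    pairingFunctional B pa p =
      ∑ K ∈ B.powerset, (-1) ^ #K * coeff (sqfreeExp (swapSet B pa K)) p := by
  simp [pairingFunctional]

variable {B pa}

lemma disjoint_image_sdiff (hout : ∀ b ∈ B, pa b ∉ B) {K : Finset σ} (hK : K ⊆ B) :
    Disjoint (K.image pa) (B \ K) := by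
  rw [disjoint_left]
  rintro _ hx hx'
  obtain ⟨b, hb, rfl⟩ := mem_image.1 hx
  exact hout b (hK hb) (mem_sdiff.1 hx').1

lemma card_swapSet (hinj : Set.InjOn pa B) (hout : ∀ b ∈ B, pa b ∉ B) {K : Finset σ}
    (hK : K ⊆ B) : #(swapSet B pa K) = #B := by
  rw [swapSet, card_union_of_disjoint (disjoint_image_sdiff hout hK),
    card_image_of_injOn (hinj.mono (coe_subset.2 hK)), card_sdiff_of_subset hK]
  have := card_le_card hK
  omega

lemma swapSet_eq_self_iff (hout : ∀ b ∈ B, pa b ∉ B) {K : Finset σ} (hK : K ⊆ B) :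
    swapSet B pa K = B ↔ K = ∅ := by
  refine ⟨fun h => eq_empty_of_forall_notMem fun b hb => ?_, fun h => by simp [swapSet, h]⟩
  have : pa b ∈ swapSet B pa K := mem_union_left _ (mem_image_of_mem pa hb)
  exact hout b (hK hb) (h ▸ this)

lemma swapSet_insert (hout : ∀ b ∈ B, pa b ∉ B) {K : Finset σ} {b : σ} (hK : K ⊆ B)
    (hb : b ∈ B) :
    swapSet B pa (insert b K) = insert (pa b) ((swapSet B pa K).erase b) := by
  have hbim : b ∉ K.image pa := fun h => by
    obtain ⟨c, hc, hcb⟩ := mem_image.1 h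
    exact hout c (hK hc) (hcb ▸ hb)
  rw [swapSet, swapSet, image_insert, insert_union, erase_union_distrib,
    erase_eq_of_notMem hbim, sdiff_insert]

lemma sum_swapSet_lt (hinj : Set.InjOn pa B) (hout : ∀ b ∈ B, pa b ∉ B) {w : σ → ℕ}
    (hlt : ∀ b ∈ B, w (pa b) < w b) {K : Finset σ} (hK : K ⊆ B) (hne : K.Nonempty) :
    ∑ i ∈ swapSet B pa K, w i < ∑ i ∈ B, w i := by
  rw [swapSet, sum_union (disjoint_image_sdiff hout hK),
    sum_image fun x hx y hy h => hinj (hK hx) (hK hy) h, ← sum_sdiff hK, add_comm]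
  exact Nat.add_lt_add_left (sum_lt_sum_of_nonempty hne fun b hb => hlt b (hK hb)) _

/-- Otherwise `b ↦ if pa b ∈ C then pa b else b` would inject `B` into `C`. -/
lemma exists_mem_notMem_of_card_lt (hinj : Set.InjOn pa B) (hout : ∀ b ∈ B, pa b ∉ B)
    {C : Finset σ} (hC : #C < #B) : ∃ b ∈ B, b ∉ C ∧ pa b ∉ C := by
  by_contra! h
  have hmaps : Set.MapsTo (fun b => if pa b ∈ C then pa b else b) B C := by
    intro b hb
    dsimp only
    split_ifs with hpb
    · exact hpb
    · by_contra hbC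
      exact hpb (h b hb hbC)
  have hinj' : Set.InjOn (fun b => if pa b ∈ C then pa b else b) B := by
    intro x hx y hy hxy
    dsimp only at hxy
    split_ifs at hxy
    · exact hinj hx hy hxy
    · exact absurd (hxy ▸ hy) (hout x hx)
    · exact absurd (hxy ▸ hx) (hout y hy)
    · exact hxy
  exact absurd (card_le_card_of_injOn _ hmaps hinj') (not_le.2 hC)

lemma pairingFunctional_X_sq_mul (i : σ) (q : MvPolynomial σ ℤ) :
    pairingFunctional B pa (X i ^ 2 * q) = 0 := by
  rw [pairingFunctional_apply]
  refine sum_eq_zero fun K _ => ?_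
  have := sqfreeExp_le_one (swapSet B pa K) i
  rw [X_pow_eq_monomial, coeff_monomial_mul', if_neg (by rw [Finsupp.single_le_iff]; omega),
    mul_zero]

lemma pairingFunctional_prod_X_mul (hinj : Set.InjOn pa B) (hout : ∀ b ∈ B, pa b ∉ B)
    {I : Finset σ} (hI : #B < #I) (q : MvPolynomial σ ℤ) :
    pairingFunctional B pa ((∏ i ∈ I, X i) * q) = 0 := by
  rw [pairingFunctional_apply]
  refine sum_eq_zero fun K hK => ?_
  rw [coeff_sqfreeExp_prod_X_mul, if_neg, mul_zero]
  intro hIK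
  have := card_le_card hIK
  rw [card_swapSet hinj hout (mem_powerset.1 hK)] at this
  omega

lemma pairingFunctional_prod_X (U : Finset σ) :
    pairingFunctional B pa (∏ i ∈ U, X i) =
      ∑ K ∈ B.powerset, if swapSet B pa K = U then (-1) ^ #K else 0 := by
  rw [pairingFunctional_apply]
  refine sum_congr rfl fun K _ => ?_
  simp only [prod_X_eq_monomial, coeff_monomial, sqfreeExp_injective.eq_iff, eq_comm (a := U)]
  split_ifs <;> simp

lemma pairingFunctional_prod_X_self (hout : ∀ b ∈ B, pa b ∉ B) :
    pairingFunctional B pa (∏ i ∈ B, X i) = 1 := by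
  rw [pairingFunctional_prod_X, sum_eq_single_of_mem ∅ (empty_mem_powerset B)]
  · simp [swapSet]
  · intro K hK hne
    rw [if_neg (mt (swapSet_eq_self_iff hout (mem_powerset.1 hK)).1 hne)]

lemma exists_swapSet_eq_of_pairingFunctional_ne_zero {U : Finset σ}
    (h : pairingFunctional B pa (∏ i ∈ U, X i) ≠ 0) : ∃ K ⊆ B, swapSet B pa K = U := by
  rw [pairingFunctional_prod_X] at h
  obtain ⟨K, hK, hne⟩ := exists_ne_zero_of_sum_ne_zero h
  exact ⟨K, mem_powerset.1 hK, of_not_not fun h' => hne (if_neg h')⟩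

lemma sum_lt_sum_of_pairingFunctional_prod_X_ne_zero (hinj : Set.InjOn pa B)
    (hout : ∀ b ∈ B, pa b ∉ B) {w : σ → ℕ} (hlt : ∀ b ∈ B, w (pa b) < w b) {U : Finset σ}
    (hU : U ≠ B) (h : pairingFunctional B pa (∏ i ∈ U, X i) ≠ 0) :
    ∑ i ∈ U, w i < ∑ i ∈ B, w i := by
  obtain ⟨K, hK, rfl⟩ := exists_swapSet_eq_of_pairingFunctional_ne_zero h
  refine sum_swapSet_lt hinj hout hlt hK (nonempty_iff_ne_empty.2 fun hK' => hU ?_)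
  exact (swapSet_eq_self_iff hout hK).2 hK'

/-- The terms cancel in pairs `K`, `insert b K`, for any `b ∈ B` with both `b` and `pa b` in
`I \ T`; such a `b` exists since `T ∪ Iᶜ` has fewer than `#B` elements. -/
lemma pairingFunctional_prod_X_mul_esymm [Fintype σ] (hinj : Set.InjOn pa B)
    (hout : ∀ b ∈ B, pa b ∉ B) {T I : Finset σ} {k : ℕ} (hk : k + #I = Fintype.card σ + 1) :
    pairingFunctional B pa ((∏ i ∈ T, X i) * ∑ J ∈ I.powersetCard k, ∏ i ∈ J, X i) = 0 := by
  have hform : pairingFunctional B pa ((∏ i ∈ T, X i) * ∑ J ∈ I.powersetCard k, ∏ i ∈ J, X i)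
      = ∑ K ∈ B.powerset, if T ⊆ swapSet B pa K ∧ swapSet B pa K \ T ∈ I.powersetCard k
          then (-1) ^ #K else 0 := by
    rw [pairingFunctional_apply]
    refine sum_congr rfl fun K _ => ?_
    rw [coeff_sqfreeExp_prod_X_mul, coeff_sqfreeExp_sum_prod_X]
    split_ifs <;> simp_all
  rw [hform]
  by_cases hTk : #T + k = #B
  swap
  · refine sum_eq_zero fun K hK => if_neg fun ⟨hTS, hS⟩ => hTk ?_
    have h₁ := card_sdiff_of_subset hTS
    have h₂ := card_le_card hTS
    rw [card_swapSet hinj hout (mem_powerset.1 hK)] at h₁ h₂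
    rw [(mem_powersetCard.1 hS).2] at h₁
    omega
  have hI : #I ≤ Fintype.card σ := card_le_univ I
  obtain ⟨b, hbB, hbC, hpbC⟩ := exists_mem_notMem_of_card_lt hinj hout (C := T ∪ Iᶜ) <| by
    calc #(T ∪ Iᶜ) ≤ #T + #Iᶜ := card_union_le _ _
      _ < #B := by rw [card_compl]; omega
  simp only [mem_union, mem_compl, not_or, not_not] at hbC hpbC
  refine sum_powerset_eq_zero_of_insert_eq_neg hbB _ fun K hK => ?_
  have hbK : b ∉ K := fun h => notMem_erase b B (hK h)
  have hKB : K ⊆ B := hK.trans (erase_subset b B)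
  have hbS : b ∈ swapSet B pa K := mem_union_right _ (mem_sdiff.2 ⟨hbB, hbK⟩)
  have hpbS : pa b ∉ swapSet B pa K := by
    intro h
    rcases mem_union.1 h with h | h
    · obtain ⟨c, hc, hcb⟩ := mem_image.1 h
      exact hbK (hinj (hKB hc) hbB hcb ▸ hc)
    · exact hout b hbB (mem_sdiff.1 h).1
  rw [swapSet_insert hout hKB hbB, card_insert_of_notMem hbK, pow_succ]
  simp only [insert_erase_sdiff_mem_powersetCard_iff hbS hpbS hbC.2 hpbC.2 hbC.1 hpbC.1]
  split_ifs <;> simp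

lemma pairingFunctional_mul_esymm [Fintype σ] (hinj : Set.InjOn pa B)
    (hout : ∀ b ∈ B, pa b ∉ B) {I : Finset σ} {k : ℕ} (hk : k + #I = Fintype.card σ + 1)
    (g : MvPolynomial σ ℤ) :
    pairingFunctional B pa (g * ∑ J ∈ I.powersetCard k, ∏ i ∈ J, X i) = 0 :=
  map_mul_eq_zero_of_prod_X_mul _ pairingFunctional_X_sq_mul
    (fun _ => pairingFunctional_prod_X_mul_esymm hinj hout hk) g

end PairingFunctional

section Ballot

def IsBallot (S : Finset ℕ) : Prop := ∀ t ∈ S, 2 * #{i ∈ S | i ≤ t} ≤ t + 1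

instance : DecidablePred IsBallot := fun _ => decidableDforallFinset

def natBallotSets (n d : ℕ) : Finset (Finset ℕ) :=
  {S ∈ (range n).powerset | #S ≤ d ∧ IsBallot S}

lemma mem_natBallotSets {n d : ℕ} {S : Finset ℕ} :
    S ∈ natBallotSets n d ↔ (∀ i ∈ S, i < n) ∧ #S ≤ d ∧ IsBallot S := by
  simp [natBallotSets, subset_iff]

lemma IsBallot.two_mul_card_le {n : ℕ} {S : Finset ℕ} (hS : IsBallot S) (hn : ∀ i ∈ S, i < n) :
    2 * #S ≤ n := by
  rcases S.eq_empty_or_nonempty with rfl | hne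
  · simp
  have hmax := hS _ (S.max'_mem hne)
  rw [filter_true_of_mem fun i hi => S.le_max' i hi] at hmax
  have := hn _ (S.max'_mem hne)
  omega

lemma isBallot_insert {n : ℕ} {S : Finset ℕ} (hn : ∀ i ∈ S, i < n) :
    IsBallot (insert n S) ↔ IsBallot S ∧ 2 * (#S + 1) ≤ n + 1 := by
  have hnS : n ∉ S := fun h => (hn n h).false
  have htop : {i ∈ insert n S | i ≤ n} = insert n S :=
    filter_true_of_mem fun i hi => by
      rcases mem_insert.1 hi with rfl | hi
      exacts [le_rfl, (hn i hi).le]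
  have hbelow : ∀ t ∈ S, {i ∈ insert n S | i ≤ t} = {i ∈ S | i ≤ t} := fun t ht => by
    rw [filter_insert, if_neg (by have := hn t ht; omega)]
  rw [IsBallot, forall_mem_insert, htop, card_insert_of_notMem hnS, IsBallot, and_comm]
  exact and_congr_left fun _ => forall₂_congr fun t ht => by rw [hbelow t ht]

lemma natBallotSets_zero_right (n : ℕ) : natBallotSets n 0 = {∅} := by
  ext S
  simp only [mem_natBallotSets, Nat.le_zero, card_eq_zero, mem_singleton]
  constructor
  · exact fun h => h.2.1
  · rintro rfl
    simp [IsBallot]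

lemma natBallotSets_succ_right_of_le {n d : ℕ} (h : n ≤ 2 * d + 1) :
    natBallotSets n (d + 1) = natBallotSets n d := by
  ext S
  simp only [mem_natBallotSets]
  refine ⟨fun ⟨hn, _, hS⟩ => ⟨hn, ?_, hS⟩, fun ⟨hn, hd, hS⟩ => ⟨hn, by omega, hS⟩⟩
  have := hS.two_mul_card_le hn
  omega

lemma natBallotSets_succ_succ {n d : ℕ} (h : 2 * (d + 1) ≤ n + 1) :
    natBallotSets (n + 1) (d + 1) =
      natBallotSets n (d + 1) ∪ (natBallotSets n d).image (insert n) := by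
  ext S
  simp only [mem_union, mem_image, mem_natBallotSets]
  constructor
  · rintro ⟨hn, hd, hS⟩
    by_cases hnS : n ∈ S
    · right
      have hlt : ∀ i ∈ S.erase n, i < n := fun i hi => by
        have := hn i (mem_of_mem_erase hi); have := ne_of_mem_erase hi; omega
      have := card_erase_of_mem hnS
      refine ⟨S.erase n, ⟨hlt, by omega, ?_⟩, insert_erase hnS⟩
      exact ((isBallot_insert hlt).1 (by rwa [insert_erase hnS])).1
    · left
      exact ⟨fun i hi => by have := hn i hi; have : i ≠ n := fun h => hnS (h ▸ hi); omega,
        hd, hS⟩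
  · rintro (⟨hn, hd, hS⟩ | ⟨T, ⟨hn, hd, hT⟩, rfl⟩)
    · exact ⟨fun i hi => (hn i hi).trans (Nat.lt_succ_self n), hd, hS⟩
    · have hnT : n ∉ T := fun h => (hn n h).false
      refine ⟨fun i hi => ?_, by rw [card_insert_of_notMem hnT]; omega,
        (isBallot_insert hn).2 ⟨hT, by omega⟩⟩
      rcases mem_insert.1 hi with rfl | hi
      exacts [Nat.lt_succ_self i, (hn i hi).trans (Nat.lt_succ_self n)]

lemma card_natBallotSets_succ_succ {n d : ℕ} (h : 2 * (d + 1) ≤ n + 1) :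
    #(natBallotSets (n + 1) (d + 1)) = #(natBallotSets n (d + 1)) + #(natBallotSets n d) := by
  have hnot : ∀ T ∈ natBallotSets n d, n ∉ T := fun T hT h =>
    ((mem_natBallotSets.1 hT).1 n h).false
  rw [natBallotSets_succ_succ h, card_union_of_disjoint, card_image_of_injOn]
  · intro T hT U hU hTU
    rw [← erase_insert (hnot T hT), ← erase_insert (hnot U hU)]
    exact congrArg (erase · n) hTU
  · rw [disjoint_left]
    intro S hS hS'
    obtain ⟨T, -, rfl⟩ := mem_image.1 hS'
    exact ((mem_natBallotSets.1 hS).1 n (mem_insert_self n T)).false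

/-- The boundary case `2 * d = n + 1` reduces to `d - 1` since ballot sets in `range n` have
at most `n / 2` elements, and `C(n, d) = C(n, d - 1)` there. -/
lemma card_natBallotSets (n d : ℕ) (h : 2 * d ≤ n + 1) : #(natBallotSets n d) = n.choose d := by
  induction n generalizing d with
  | zero =>
    obtain rfl : d = 0 := by omega
    simp [natBallotSets_zero_right]
  | succ n ih =>
    have hlow : ∀ d, 2 * d ≤ n + 1 → #(natBallotSets (n + 1) d) = (n + 1).choose d := by
      rintro (_ | d) hd
      · simp [natBallotSets_zero_right]
      · rw [card_natBallotSets_succ_succ hd, ih _ hd, ih _ (by omega), Nat.choose_succ_succ',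
          add_comm]
    rcases d with _ | d
    · simp [natBallotSets_zero_right]
    by_cases hd : 2 * (d + 1) ≤ n + 1
    · exact hlow _ hd
    · obtain rfl : n = 2 * d := by omega
      rw [natBallotSets_succ_right_of_le (by omega), hlow d (by omega),
        ← Nat.choose_symm (by omega)]
      congr 1
      omega

def ballotSets (n d : ℕ) : Finset (Finset (Fin n)) :=
  {S | #S ≤ d ∧ IsBallot (S.map Fin.valEmbedding)}

lemma mem_ballotSets {n d : ℕ} {S : Finset (Fin n)} :
    S ∈ ballotSets n d ↔ #S ≤ d ∧ ∀ t ∈ S, 2 * #{i ∈ S | i ≤ t} ≤ t + 1 := by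
  simp only [ballotSets, mem_filter, mem_univ, true_and, IsBallot, forall_mem_map, filter_map,
    card_map]
  rfl

lemma map_ballotSets (n d : ℕ) :
    (ballotSets n d).map (mapEmbedding Fin.valEmbedding).toEmbedding = natBallotSets n d := by
  refine Finset.ext fun T => ?_
  simp only [mem_map, ballotSets, mem_filter, mem_univ, true_and, RelEmbedding.coe_toEmbedding,
    mapEmbedding_apply, mem_natBallotSets]
  constructor
  · rintro ⟨S, ⟨hd, hS⟩, rfl⟩
    exact ⟨by simp, by simpa using hd, hS⟩
  · rintro ⟨hn, hd, hT⟩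
    have hmap : (T.attachFin hn).map Fin.valEmbedding = T := by
      ext i
      simp only [mem_map, mem_attachFin, Fin.valEmbedding_apply]
      exact ⟨fun ⟨j, hj, hji⟩ => hji ▸ hj, fun hi => ⟨⟨i, hn i hi⟩, hi, rfl⟩⟩
    exact ⟨T.attachFin hn, ⟨by rwa [card_attachFin], by rwa [hmap]⟩, hmap⟩

lemma card_ballotSets {n d : ℕ} (h : 2 * d ≤ n + 1) : #(ballotSets n d) = n.choose d := by
  rw [← card_natBallotSets n d h, ← map_ballotSets, card_map]

/-- Hall's marriage theorem: an initial segment `Iic b` of a ballot set contains at least as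
many non-members as members. -/
lemma exists_pairing {n : ℕ} {S : Finset (Fin n)} (hS : ∀ t ∈ S, 2 * #{i ∈ S | i ≤ t} ≤ t + 1) :
    ∃ pa : Fin n → Fin n, Set.InjOn pa S ∧ ∀ b ∈ S, pa b < b ∧ pa b ∉ S := by
  let t : S → Finset (Fin n) := fun b => {x ∈ Iic b.1 | x ∉ S}
  have hall : ∀ s : Finset S, #s ≤ #(s.biUnion t) := by
    intro s
    rcases s.eq_empty_or_nonempty with rfl | hne
    · simp
    obtain ⟨bm, hbm, hmax⟩ := s.exists_max_image Subtype.val hne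
    have hs : #s ≤ #{i ∈ S | i ≤ bm.1} :=
      card_le_card_of_injOn Subtype.val (fun b hb => by simpa using hmax b hb)
        Subtype.val_injective.injOn
    have hsplit : #{x ∈ Iic bm.1 | x ∈ S} + #(t bm) = bm.1 + 1 := by
      rw [card_filter_add_card_filter_not, Fin.card_Iic]
    have hfilter : {x ∈ Iic bm.1 | x ∈ S} = {i ∈ S | i ≤ bm.1} := by
      ext; simp [and_comm]
    rw [hfilter] at hsplit
    have := hS _ bm.2
    have := card_le_card (subset_biUnion_of_mem t hbm)
    omega
  obtain ⟨f, hfinj, hf⟩ := (all_card_le_biUnion_card_iff_exists_injective t).1 hall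
  refine ⟨fun x => if h : x ∈ S then f ⟨x, h⟩ else x, ?_, fun b hb => ?_⟩
  · intro x hx y hy h
    simp only [mem_coe] at hx hy
    simp only [dif_pos hx, dif_pos hy] at h
    exact congrArg Subtype.val (hfinj h)
  · have hfb := hf ⟨b, hb⟩
    simp only [t, mem_filter, mem_Iic] at hfb
    simp only [dif_pos hb]
    exact ⟨lt_of_le_of_ne hfb.1 fun h => hfb.2 (by rw [h]; exact hb), hfb.2⟩

end Ballot

lemma sum_lt_sum_of_card_eq {σ : Type*} [DecidableEq σ] {w : σ → ℕ} {J₀ J : Finset σ}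
    (hcard : #J = #J₀) (hne : J ≠ J₀) (hlt : ∀ x ∈ J₀, ∀ y ∈ J \ J₀, w x < w y) :
    ∑ i ∈ J₀, w i < ∑ i ∈ J, w i := by
  have hnon : (J \ J₀).Nonempty :=
    sdiff_nonempty.2 fun h => hne (eq_of_subset_of_card_le h hcard.ge)
  have hcomm : #(J₀ \ J) = #(J \ J₀) := card_sdiff_comm hcard.symm
  have hnon' : (J₀ \ J).Nonempty := card_pos.1 (hcomm ▸ card_pos.2 hnon)
  obtain ⟨y, hy, hmin⟩ := (J \ J₀).exists_min_image w hnon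
  have key : ∑ i ∈ J₀ \ J, w i < ∑ i ∈ J \ J₀, w i :=
    calc ∑ i ∈ J₀ \ J, w i < ∑ _i ∈ J₀ \ J, w y :=
          sum_lt_sum_of_nonempty hnon' fun x hx => hlt x (mem_sdiff.1 hx).1 y hy
      _ = #(J \ J₀) • w y := by rw [sum_const, hcomm]
      _ ≤ ∑ i ∈ J \ J₀, w i := card_nsmul_le_sum _ _ _ hmin
  have h₀ : ∑ i ∈ J₀, w i = ∑ i ∈ J₀ \ J, w i + ∑ i ∈ J₀ ∩ J, w i := by
    rw [← sum_union (disjoint_sdiff_inter J₀ J), sdiff_union_inter]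
  have h₁ : ∑ i ∈ J, w i = ∑ i ∈ J \ J₀, w i + ∑ i ∈ J₀ ∩ J, w i := by
    rw [inter_comm, ← sum_union (disjoint_sdiff_inter J J₀), sdiff_union_inter]
  omega

lemma exists_esymm_index_of_not_ballot {n d : ℕ} (hd : 2 * d ≤ n) {S : Finset (Fin n)}
    (hS : #S ≤ d) {t : Fin n} (ht : t + 1 < 2 * #{i ∈ S | i ≤ t}) :
    ∃ I, {i ∈ S | i ≤ t} ⊆ I ∧ I ⊆ {i ∈ S | i ≤ t} ∪ Ioi t ∧
      #{i ∈ S | i ≤ t} + #I = n + 1 := by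
  set J₀ := {i ∈ S | i ≤ t}
  have hk : #J₀ ≤ #S := card_filter_le _ _
  have hdisj : Disjoint J₀ (Ioi t) :=
    disjoint_left.2 fun x hx hx' => not_lt.2 (mem_filter.1 hx).2 (mem_Ioi.1 hx')
  have ht' := t.isLt
  obtain ⟨I, h₁, h₂, hI⟩ := exists_subsuperset_card_eq (s := J₀) (t := J₀ ∪ Ioi t)
    (n := n + 1 - #J₀) subset_union_left (by omega)
    (by rw [card_union_of_disjoint hdisj, Fin.card_Ioi]; omega)
  exact ⟨I, h₁, h₂, by omega⟩

section Straightening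

variable {R : Type*} [CommRing R]

lemma prod_X_eq_mul_sum_powersetCard_sub {σ : Type*} [DecidableEq σ] {S J₀ I : Finset σ}
    (hJ₀S : J₀ ⊆ S) (hJ₀I : J₀ ⊆ I) :
    ∏ i ∈ S, (X i : MvPolynomial σ R) =
      (∏ i ∈ S \ J₀, X i) * ∑ J ∈ I.powersetCard #J₀, ∏ i ∈ J, X i -
        ∑ J ∈ (I.powersetCard #J₀).erase J₀, (∏ i ∈ S \ J₀, X i) * ∏ i ∈ J, X i := by
  rw [mul_sum, ← add_sum_erase _ _ (mem_powersetCard.2 ⟨hJ₀I, rfl⟩), ← prod_union sdiff_disjoint,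
    sdiff_union_of_subset hJ₀S, add_sub_cancel_right]

variable {n d : ℕ} {N : Submodule R (MvPolynomial (Fin n) R)}

/-- If `X_S` fails the ballot condition at `t`, with `J₀ = {i ∈ S | i ≤ t}` of size `k`, then
`X_{S \ J₀} e_k(I)` for a suitable `I ⊇ J₀` expresses `X_S` through monomials of larger weight
`∑ i ∈ S, i`. -/
lemma prod_X_mem_of_ballotSets (hd : 2 * d ≤ n) (hsq : ∀ i q, X i ^ 2 * q ∈ N)
    (hcard : ∀ S : Finset (Fin n), d < #S → ∏ i ∈ S, (X i : MvPolynomial (Fin n) R) ∈ N)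
    (hesymm : ∀ (T I : Finset (Fin n)) (k : ℕ), k + #I = n + 1 →
      (∏ i ∈ T, X i) * ∑ J ∈ I.powersetCard k, ∏ i ∈ J, X i ∈ N)
    (hballot : ∀ S ∈ ballotSets n d, ∏ i ∈ S, (X i : MvPolynomial (Fin n) R) ∈ N)
    (S : Finset (Fin n)) : ∏ i ∈ S, (X i : MvPolynomial (Fin n) R) ∈ N := by
  induction hM : ∑ i : Fin n, (i : ℕ) - ∑ i ∈ S, (i : ℕ) using Nat.strong_induction_on
    generalizing S with
  | _ M ih =>
  by_cases hS : #S ≤ d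
  swap
  · exact hcard S (not_le.1 hS)
  by_cases hSb : S ∈ ballotSets n d
  · exact hballot S hSb
  obtain ⟨t, -, ht⟩ : ∃ t ∈ S, t + 1 < 2 * #{i ∈ S | i ≤ t} := by
    simpa [mem_ballotSets, hS] using hSb
  set J₀ := {i ∈ S | i ≤ t}
  obtain ⟨I, hJ₀I, hI, hk⟩ := exists_esymm_index_of_not_ballot hd hS ht
  have hJ₀S : J₀ ⊆ S := filter_subset _ S
  set T := S \ J₀
  have hTJ₀ : Disjoint T J₀ := sdiff_disjoint
  rw [prod_X_eq_mul_sum_powersetCard_sub hJ₀S hJ₀I]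
  refine N.sub_mem (hesymm T I _ hk) (N.sum_mem fun J hJ => ?_)
  obtain ⟨hJne, hJ⟩ := mem_erase.1 hJ
  obtain ⟨hJI, hJcard⟩ := mem_powersetCard.1 hJ
  by_cases hTJ : Disjoint T J
  swap
  · obtain ⟨i, q, hq⟩ := prod_X_mul_prod_X_eq_X_sq_mul (R := R) hTJ
    exact hq ▸ hsq i q
  have hlt : ∑ i ∈ J₀, (i : ℕ) < ∑ i ∈ J, (i : ℕ) := by
    refine sum_lt_sum_of_card_eq hJcard hJne fun x hx y hy => ?_
    have hyt : t < y := by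
      obtain ⟨hyI, hyJ₀⟩ := mem_sdiff.1 hy
      exact mem_Ioi.1 ((mem_union.1 (hI (hJI hyI))).resolve_left hyJ₀)
    exact Fin.lt_def.1 (lt_of_le_of_lt (mem_filter.1 hx).2 hyt)
  have hbound : ∑ i ∈ T ∪ J, (i : ℕ) ≤ ∑ i : Fin n, (i : ℕ) :=
    sum_le_sum_of_subset (subset_univ _)
  have hS' : ∑ i ∈ S, (i : ℕ) = ∑ i ∈ T, (i : ℕ) + ∑ i ∈ J₀, (i : ℕ) := by
    rw [← sum_union hTJ₀, sdiff_union_of_subset hJ₀S]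
  rw [← prod_union hTJ]
  refine ih _ ?_ (T ∪ J) rfl
  rw [sum_union hTJ] at hbound ⊢
  omega

end Straightening

section SpringerIdeal

variable {n m : ℕ}

lemma X_sq_mem_springerIdeal (i : Fin n) : X i ^ 2 ∈ springerIdeal n m :=
  Ideal.subset_span (.inl (.inl ⟨i, rfl⟩))

lemma prod_X_mem_springerIdeal {S : Finset (Fin n)} (hS : (n - m) / 2 < #S) :
    ∏ i ∈ S, X i ∈ springerIdeal n m := by
  obtain ⟨I, hIS, hI⟩ := exists_subset_card_eq (s := S) (n := (n - m) / 2 + 1) hS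
  rw [← prod_sdiff hIS]
  exact Ideal.mul_mem_left _ _ (Ideal.subset_span (.inl (.inr ⟨I, hI, rfl⟩)))

lemma esymm_mem_springerIdeal {I : Finset (Fin n)} {k : ℕ} (hk : k + #I = n + 1) :
    ∑ J ∈ I.powersetCard k, ∏ i ∈ J, X i ∈ springerIdeal n m :=
  Ideal.subset_span (.inr ⟨I, k, hk, rfl⟩)

lemma pairingFunctional_eq_zero_of_mem_springerIdeal {B : Finset (Fin n)} {pa : Fin n → Fin n}
    (hinj : Set.InjOn pa B) (hout : ∀ b ∈ B, pa b ∉ B) (hB : #B ≤ (n - m) / 2)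
    {p : MvPolynomial (Fin n) ℤ} (hp : p ∈ springerIdeal n m) : pairingFunctional B pa p = 0 := by
  refine map_eq_zero_of_mem_span _ ?_ hp
  rintro _ ((⟨i, rfl⟩ | ⟨I, hI, rfl⟩) | ⟨I, k, hk, rfl⟩) g
  · rw [mul_comm]
    exact pairingFunctional_X_sq_mul i g
  · rw [mul_comm]
    exact pairingFunctional_prod_X_mul hinj hout (by omega) g
  · exact pairingFunctional_mul_esymm hinj hout (by simpa using hk) g

variable (n m) in
lemma span_mk_prod_X_ballotSets :
    ⊤ ≤ Submodule.span ℤ (Set.range fun S : ballotSets n ((n - m) / 2) =>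
      Ideal.Quotient.mk (springerIdeal n m) (∏ i ∈ S.1, X i)) := by
  rintro q -
  obtain ⟨p, rfl⟩ := Ideal.Quotient.mk_surjective q
  let N := (Submodule.span ℤ (Set.range fun S : ballotSets n ((n - m) / 2) =>
      Ideal.Quotient.mk (springerIdeal n m) (∏ i ∈ S.1, X i))).comap
    (Ideal.Quotient.mkₐ ℤ (springerIdeal n m)).toLinearMap
  have hI : ∀ p ∈ springerIdeal n m, p ∈ N := fun p hp => by
    simp [N, Ideal.Quotient.eq_zero_iff_mem.2 hp]
  have hsq : ∀ i q, X i ^ 2 * q ∈ N := fun i q =>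
    hI _ (Ideal.mul_mem_right _ _ (X_sq_mem_springerIdeal i))
  refine mem_of_prod_X_mem hsq (prod_X_mem_of_ballotSets (by omega) hsq
    (fun S hS => hI _ (prod_X_mem_springerIdeal hS))
    (fun T I k hk => hI _ (Ideal.mul_mem_left _ _ (esymm_mem_springerIdeal hk)))
    fun S hS => Submodule.subset_span ⟨⟨S, hS⟩, rfl⟩) p

variable (n m) in
lemma linearIndependent_mk_prod_X_ballotSets :
    LinearIndependent ℤ fun S : ballotSets n ((n - m) / 2) =>
      Ideal.Quotient.mk (springerIdeal n m) (∏ i ∈ S.1, X i) := by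
  choose pa hinj hpa using fun B : ballotSets n ((n - m) / 2) =>
    exists_pairing (mem_ballotSets.1 B.2).2
  have hout : ∀ B : ballotSets n ((n - m) / 2), ∀ b ∈ B.1, pa B b ∉ B.1 :=
    fun B b hb => (hpa B b hb).2
  refine linearIndependent_of_triangular
    (fun B => quotientLift _ (pairingFunctional B.1 (pa B)) fun p hp =>
      pairingFunctional_eq_zero_of_mem_springerIdeal (hinj B) (hout B) (mem_ballotSets.1 B.2).1 hp)
    (fun S => ∑ i ∈ S.1, (i : ℕ)) (fun B => ?_) (fun B S hSB h => ?_)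
  · rw [quotientLift_mk, pairingFunctional_prod_X_self (hout B)]
  · rw [quotientLift_mk] at h
    exact sum_lt_sum_of_pairingFunctional_prod_X_ne_zero (hinj B) (hout B)
      (fun b hb => Fin.lt_def.1 (hpa B b hb).1) (fun h' => hSB (Subtype.ext h')) h

end SpringerIdeal

end Springer

theorem stmt10_general (n m : ℕ) :
    Module.Free ℤ (MvPolynomial (Fin n) ℤ ⧸ springerIdeal n m) ∧
    Module.finrank ℤ (MvPolynomial (Fin n) ℤ ⧸ springerIdeal n m) =
      Nat.choose n ((n - m) / 2) := by
  let b := Module.Basis.mk (Springer.linearIndependent_mk_prod_X_ballotSets n m)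
    (Springer.span_mk_prod_X_ballotSets n m)
  refine ⟨.of_basis b, ?_⟩
  rw [Module.finrank_eq_card_basis b, Fintype.card_coe, Springer.card_ballotSets (by omega)]

/-- For `0 ≤ m ≤ n` with `n ≡ m (mod 2)`, the quotient `R/R₁` is a free
`ℤ`-module of rank `C(n, (n−m)/2)`. -/
theorem stmt10 (n m : ℕ) (hm : m ≤ n) (hpar : n % 2 = m % 2) :
    Module.Free ℤ (MvPolynomial (Fin n) ℤ ⧸ springerIdeal n m) ∧
    Module.finrank ℤ (MvPolynomial (Fin n) ℤ ⧸ springerIdeal n m) =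
      Nat.choose n ((n - m) / 2) :=
  stmt10_general n m
end

section
/- Let μ = (μ_1,…,μ_N) with each μ_i ∈ {0,1,2}. The number of semi-standard Young tableaux of shape λ = two columns of lengths s+k and s, filled with μ_i copies of i (columns strictly increasing, rows non-decreasing), equals the number of crossingless matchings of the m(μ) points {i : μ_i = 1} with one platform of k points on the left, where m(μ) = #{i : μ_i = 1}; there is an explicit bijection between these two sets. -/
/-- Semi-standard Young tableaux of the two-column shape `λ = ω_s + ω_{s+k}`
(columns of lengths `s+k` and `s`) with entries in `{1,…,N}` and content `μ`:
the left column `T.1` and right column `T.2` are strictly increasing, rows are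
weakly increasing, and the value `v` occurs exactly `μ v` times in total. -/
def SSYT (N s k : ℕ) (μ : Fin N → ℕ) : Type :=
  {T : (Fin (s + k) → Fin N) × (Fin s → Fin N) //
    StrictMono T.1 ∧ StrictMono T.2 ∧
    (∀ i : Fin s, T.1 (Fin.castLE (Nat.le_add_right s k) i) ≤ T.2 i) ∧
    (∀ v : Fin N,
      (Finset.univ.filter fun j => T.1 j = v).card +
        (Finset.univ.filter fun j => T.2 j = v).card = μ v)}

/-- Crossingless matchings of the points `M_μ = {i : μ i = 1}` with one
platform of `k` points: a set of non-interleaving arcs `(i,j)`, `i < j`, among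
the points of `M_μ`, pairwise disjoint, with exactly `k` points of `M_μ` left
unmatched (connected to the platform), and no unmatched point nested strictly
inside an arc. -/
def PlatformMatchings (N k : ℕ) (μ : Fin N → ℕ) : Type :=
  {M : Finset (Fin N × Fin N) //
    (∀ p ∈ M, p.1 < p.2 ∧ μ p.1 = 1 ∧ μ p.2 = 1) ∧
    (∀ p ∈ M, ∀ q ∈ M, p ≠ q →
      p.1 ≠ q.1 ∧ p.1 ≠ q.2 ∧ p.2 ≠ q.1 ∧ p.2 ≠ q.2) ∧
    (∀ p ∈ M, ∀ q ∈ M, ¬(p.1 < q.1 ∧ q.1 < p.2 ∧ p.2 < q.2)) ∧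
    (Finset.univ.filter fun i : Fin N => μ i = 1).card = 2 * M.card + k ∧
    (∀ x : Fin N, μ x = 1 → (∀ p ∈ M, p.1 ≠ x ∧ p.2 ≠ x) →
      ∀ p ∈ M, ¬(p.1 < x ∧ x < p.2))}

/-!
A tableau of shape `(s + k, s)` with content `μ ≤ 2` is determined by the set `A` of weight-one
values in its left column: the values of weight two fill both columns and the remaining weight-one
values fill the right column. Weakly increasing rows mean that every initial segment of values
contains at least as many entries of the left column as of the right one, i.e. the walk stepping
up at `A` and down at the other weight-one points stays nonnegative, and the column lengths fix
its final height at `k`. Such ballot walks correspond to crossingless matchings with a platform by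
matching parentheses: a down-step is matched with the up-step at which the walk last left its
level, and the `k` unmatched up-steps go to the platform. Conversely, the left ends of the arcs
together with the platform points form the set `A`.
-/

open Finset

lemma Finset.card_filter_image_of_injOn {α β : Type*} [DecidableEq β] {s : Finset α}
    {f : α → β} (hf : Set.InjOn f s) (P : β → Prop) [DecidablePred P] :
    #{y ∈ s.image f | P y} = #{x ∈ s | P (f x)} := by
  rw [filter_image, card_image_of_injOn (hf.mono (coe_subset.2 (filter_subset _ _)))]

lemma Finset.card_filter_apply_eq_of_injective {α β : Type*} [Fintype α] [DecidableEq β]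
    {f : α → β} (hf : Function.Injective f) (v : β) :
    #{j | f j = v} = if v ∈ univ.image f then 1 else 0 := by
  split_ifs with h
  · obtain ⟨j, -, rfl⟩ := mem_image.1 h
    rw [card_eq_one]
    exact ⟨j, by ext i; simp [hf.eq_iff]⟩
  · rw [card_eq_zero, filter_eq_empty_iff]
    exact fun j _ hj => h (hj ▸ mem_image_of_mem f (mem_univ j))

namespace SSYTMatching

variable {N : ℕ}

section Walk

def countBelow (X : Finset (Fin N)) (t : ℕ) : ℕ := #{x ∈ X | x.val < t}

lemma countBelow_zero (X : Finset (Fin N)) : countBelow X 0 = 0 := by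
  simp [countBelow]

lemma countBelow_union {X Y : Finset (Fin N)} (h : Disjoint X Y) (t : ℕ) :
    countBelow (X ∪ Y) t = countBelow X t + countBelow Y t := by
  rw [countBelow, filter_union, card_union_of_disjoint (disjoint_filter_filter h)]
  rfl

lemma countBelow_add (X : Finset (Fin N)) {t u : ℕ} (h : t ≤ u) :
    countBelow X u = countBelow X t + #{x ∈ X | t ≤ x.val ∧ x.val < u} := by
  rw [countBelow, countBelow, ← card_union_of_disjoint
    (disjoint_filter.2 fun x _ hx hx' => by omega), ← filter_or]
  congr 1
  ext x
  simp only [mem_filter]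
  exact and_congr_right fun _ => by omega

lemma countBelow_succ (X : Finset (Fin N)) (t : ℕ) :
    countBelow X (t + 1) = countBelow X t + if ∃ x ∈ X, (x : ℕ) = t then 1 else 0 := by
  rw [countBelow_add X (Nat.le_succ t)]
  congr 1
  split_ifs with h
  · obtain ⟨x, hx, rfl⟩ := h
    rw [card_eq_one]
    refine ⟨x, ?_⟩
    ext y
    simp only [mem_filter, mem_singleton, Fin.ext_iff]
    constructor
    · rintro ⟨-, h1, h2⟩
      omega
    · rintro hy
      exact ⟨Fin.ext hy ▸ hx, by omega, by omega⟩
  · rw [card_eq_zero, filter_eq_empty_iff]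
    exact fun x hx hxt => h ⟨x, hx, by omega⟩

/-- The lattice walk stepping up at the points of `A` and down at those of `C`,
after its first `t` steps. -/
def height (A C : Finset (Fin N)) (t : ℕ) : ℤ := countBelow A t - countBelow C t

variable {A C : Finset (Fin N)}

lemma height_zero : height A C 0 = 0 := by
  simp [height, countBelow_zero]

lemma height_add {t u : ℕ} (h : t ≤ u) :
    height A C u = height A C t + #{x ∈ A | t ≤ x.val ∧ x.val < u}
      - #{x ∈ C | t ≤ x.val ∧ x.val < u} := by
  rw [height, height, countBelow_add A h, countBelow_add C h]
  push_cast
  ring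

lemma height_succ (t : ℕ) :
    height A C (t + 1) = height A C t + (if ∃ a ∈ A, (a : ℕ) = t then 1 else 0)
      - (if ∃ c ∈ C, (c : ℕ) = t then 1 else 0) := by
  rw [height, height, countBelow_succ A, countBelow_succ C]
  split_ifs <;> push_cast <;> ring

lemma height_succ_le (t : ℕ) : height A C (t + 1) ≤ height A C t + 1 := by
  rw [height_succ]
  split_ifs <;> omega

lemma height_le_succ (t : ℕ) : height A C t - 1 ≤ height A C (t + 1) := by
  rw [height_succ]
  split_ifs <;> omega

lemma height_succ_of_mem_left (hd : Disjoint A C) {a : Fin N} (ha : a ∈ A) :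
    height A C (a + 1) = height A C a + 1 := by
  have hC : ¬∃ c ∈ C, (c : ℕ) = a := fun ⟨c, hc, hca⟩ =>
    disjoint_left.1 hd ha (Fin.ext hca ▸ hc)
  rw [height_succ, if_pos ⟨a, ha, rfl⟩, if_neg hC]
  ring

lemma height_succ_of_mem_right (hd : Disjoint A C) {c : Fin N} (hc : c ∈ C) :
    height A C (c + 1) = height A C c - 1 := by
  have hA : ¬∃ a ∈ A, (a : ℕ) = c := fun ⟨a, ha, hac⟩ =>
    disjoint_left.1 hd ha (Fin.ext hac ▸ hc)
  rw [height_succ, if_neg hA, if_pos ⟨c, hc, rfl⟩]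
  ring

lemma exists_mem_left_of_height_lt {t : ℕ} (h : height A C t < height A C (t + 1)) :
    ∃ a ∈ A, (a : ℕ) = t := by
  by_contra hA
  rw [height_succ, if_neg hA] at h
  split_ifs at h <;> omega

lemma exists_mem_right_of_height_lt {t : ℕ} (h : height A C (t + 1) < height A C t) :
    ∃ c ∈ C, (c : ℕ) = t := by
  by_contra hC
  rw [height_succ, if_neg hC] at h
  split_ifs at h <;> omega

end Walk

section WalkMatching

variable {A C : Finset (Fin N)}

/-- The matching of a walk: an up-step `a` is matched with the down-step `c` at which the
walk first returns below the level reached just after `a`. -/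
noncomputable def walkMatching (A C : Finset (Fin N)) : Finset (Fin N × Fin N) :=
  open scoped Classical in univ.filter fun p => p.1 ∈ A ∧ p.2 ∈ C ∧ p.1 < p.2 ∧
    height A C (p.2 + 1) = height A C (p.1 + 1) - 1 ∧
    ∀ t : ℕ, p.1 < t → t ≤ p.2 → height A C (p.1 + 1) ≤ height A C t

lemma mem_walkMatching {p : Fin N × Fin N} :
    p ∈ walkMatching A C ↔ p.1 ∈ A ∧ p.2 ∈ C ∧ p.1 < p.2 ∧
      height A C (p.2 + 1) = height A C (p.1 + 1) - 1 ∧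
      ∀ t : ℕ, p.1 < t → t ≤ p.2 → height A C (p.1 + 1) ≤ height A C t := by
  simp [walkMatching]

lemma walkMatching_fst_injOn : Set.InjOn Prod.fst (walkMatching A C : Set (Fin N × Fin N)) := by
  intro p hp q hq h
  obtain ⟨-, -, hplt, hpht, hpge⟩ := mem_walkMatching.1 hp
  obtain ⟨-, -, hqlt, hqht, hqge⟩ := mem_walkMatching.1 hq
  rcases lt_trichotomy p.2 q.2 with h2 | h2 | h2
  · have := hqge (p.2 + 1) (by rw [← h]; omega) (by omega)
    rw [h] at hpht
    omega
  · exact Prod.ext h h2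
  · have := hpge (q.2 + 1) (by rw [h]; omega) (by omega)
    rw [← h] at hqht
    omega

lemma walkMatching_snd_injOn (hd : Disjoint A C) :
    Set.InjOn Prod.snd (walkMatching A C : Set (Fin N × Fin N)) := by
  intro p hp q hq h
  obtain ⟨hp1, -, hplt, hpht, hpge⟩ := mem_walkMatching.1 hp
  obtain ⟨hq1, -, hqlt, hqht, hqge⟩ := mem_walkMatching.1 hq
  rcases lt_trichotomy p.1 q.1 with h1 | h1 | h1
  · have := height_succ_of_mem_left hd hq1
    have := hpge q.1 (by omega) (by rw [h]; omega)
    rw [h] at hpht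
    omega
  · exact Prod.ext h1 h
  · have := height_succ_of_mem_left hd hp1
    have := hqge p.1 (by omega) (by rw [← h]; omega)
    rw [← h] at hqht
    omega

lemma not_crossing_of_mem_walkMatching {p q : Fin N × Fin N}
    (hp : p ∈ walkMatching A C) (hq : q ∈ walkMatching A C) :
    ¬(p.1 < q.1 ∧ q.1 < p.2 ∧ p.2 < q.2) := by
  rintro ⟨h1, h2, h3⟩
  obtain ⟨-, -, -, hpht, hpge⟩ := mem_walkMatching.1 hp
  obtain ⟨-, -, -, hqht, hqge⟩ := mem_walkMatching.1 hq
  have := hpge (q.1 + 1) (by omega) (by omega)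
  have := hqge (p.2 + 1) (by omega) (by omega)
  omega

lemma exists_mem_walkMatching_snd_eq (hd : Disjoint A C) (hnn : ∀ t, 0 ≤ height A C t)
    {c : Fin N} (hc : c ∈ C) : ∃ p ∈ walkMatching A C, p.2 = c := by
  -- the last time `t ≤ c` at which the walk is at or below its level after `c`
  have hlast : ∃ t, height A C t ≤ height A C (c + 1) ∧ t ≤ c ∧
      ∀ u, t < u → u ≤ c → height A C (c + 1) < height A C u :=
    ⟨_, Nat.findGreatest_spec (P := fun t => height A C t ≤ height A C (c + 1))
        (Nat.zero_le _) (by rw [height_zero]; exact hnn _),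
      Nat.findGreatest_le _, fun u h1 h2 => lt_of_not_ge (Nat.findGreatest_is_greatest h1 h2)⟩
  obtain ⟨t, hPt, htc, hgt⟩ := hlast
  have hdown := height_succ_of_mem_right hd hc
  replace htc : t < c := lt_of_le_of_ne htc fun h => by
    rw [h] at hPt
    omega
  have hup : height A C (t + 1) = height A C t + 1 := by
    have := height_succ_le (A := A) (C := C) t
    have := hgt (t + 1) (by omega) htc
    omega
  obtain ⟨a, ha, rfl⟩ := exists_mem_left_of_height_lt (A := A) (C := C) (t := t) (by omega)
  refine ⟨(a, c), mem_walkMatching.2 ⟨ha, hc, htc, ?_, fun u h1 h2 => ?_⟩, rfl⟩ <;>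
    dsimp only at *
  · have := hgt (a + 1) (by omega) htc
    omega
  · rcases h2.lt_or_eq with h2 | rfl
    · have := hgt u (by omega) h2.le
      omega
    · omega

lemma exists_mem_walkMatching_fst_eq {a : Fin N} (ha : a ∈ A)
    (hdrop : ∃ u : ℕ, a < u ∧ height A C u < height A C (a + 1)) :
    ∃ p ∈ walkMatching A C, p.1 = a := by
  classical
  -- the first time after `a` at which the walk is below its level after `a`
  have hfirst : ∃ u : ℕ, (a < u ∧ height A C u < height A C (a + 1)) ∧
      ∀ t : ℕ, a < t → t < u → height A C (a + 1) ≤ height A C t :=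
    ⟨_, Nat.find_spec hdrop, fun t h1 h2 =>
      le_of_not_gt fun h3 => Nat.find_min hdrop h2 ⟨h1, h3⟩⟩
  obtain ⟨u, ⟨hau, hu⟩, hmin⟩ := hfirst
  have hau' : a + 1 < u := lt_of_le_of_ne hau fun h => by rw [← h] at hu; omega
  have hprev := hmin (u - 1) (by omega) (by omega)
  have hstep := height_le_succ (A := A) (C := C) (u - 1)
  rw [Nat.sub_add_cancel (by omega : 1 ≤ u)] at hstep
  obtain ⟨c, hc, hcu⟩ := exists_mem_right_of_height_lt (A := A) (C := C) (t := u - 1)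
    (by rw [Nat.sub_add_cancel (by omega : 1 ≤ u)]; omega)
  refine ⟨(a, c), mem_walkMatching.2 ⟨ha, hc, ?_, ?_, fun t h1 h2 => ?_⟩, rfl⟩ <;>
    dsimp only at *
  · rw [Fin.lt_def]
    omega
  · have : (c : ℕ) + 1 = u := by omega
    rw [this]
    omega
  · exact hmin t h1 (by omega)

lemma card_walkMatching (hd : Disjoint A C) (hnn : ∀ t, 0 ≤ height A C t) :
    #(walkMatching A C) = #C := by
  rw [← card_image_of_injOn (walkMatching_snd_injOn hd)]
  congr 1
  ext c
  simp only [mem_image]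
  exact ⟨fun ⟨p, hp, hpc⟩ => hpc ▸ (mem_walkMatching.1 hp).2.1,
    fun hc => exists_mem_walkMatching_snd_eq hd hnn hc⟩

lemma not_lt_lt_of_unmatched (hd : Disjoint A C) (hnn : ∀ t, 0 ≤ height A C t)
    {x : Fin N} (hx : x ∈ A ∪ C)
    (hfree : ∀ p ∈ walkMatching A C, p.1 ≠ x ∧ p.2 ≠ x) :
    ∀ p ∈ walkMatching A C, ¬(p.1 < x ∧ x < p.2) := by
  rintro p hp ⟨h1, h2⟩
  rcases mem_union.1 hx with hxA | hxC
  · obtain ⟨-, -, -, hpht, hpge⟩ := mem_walkMatching.1 hp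
    have := hpge (x + 1) (by omega) (by omega)
    obtain ⟨q, hq, rfl⟩ :=
      exists_mem_walkMatching_fst_eq (C := C) hxA ⟨(p.2 : ℕ) + 1, by omega, by omega⟩
    exact (hfree q hq).1 rfl
  · obtain ⟨q, hq, rfl⟩ := exists_mem_walkMatching_snd_eq hd hnn hxC
    exact (hfree q hq).2 rfl

end WalkMatching

section Weight

variable {μ : Fin N → ℕ}

def ones (μ : Fin N → ℕ) : Finset (Fin N) := univ.filter fun i => μ i = 1

def twos (μ : Fin N → ℕ) : Finset (Fin N) := univ.filter fun i => μ i = 2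

@[simp] lemma mem_ones {x : Fin N} : x ∈ ones μ ↔ μ x = 1 := by simp [ones]

@[simp] lemma mem_twos {x : Fin N} : x ∈ twos μ ↔ μ x = 2 := by simp [twos]

lemma disjoint_twos_of_subset_ones {X : Finset (Fin N)} (hX : X ⊆ ones μ) :
    Disjoint (twos μ) X :=
  disjoint_left.2 fun x hx hxX => by simp_all [mem_ones.1 (hX hxX)]

lemma sum_eq_two_mul_card_twos_add_card_ones (hμ : ∀ i, μ i ≤ 2) :
    ∑ i, μ i = 2 * #(twos μ) + #(ones μ) := by
  have h : ∀ i, μ i = 2 * (if μ i = 2 then 1 else 0) + (if μ i = 1 then 1 else 0) := by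
    intro i
    have := hμ i
    split_ifs <;> omega
  rw [sum_congr rfl fun i _ => h i, sum_add_distrib, ← mul_sum, sum_boole, sum_boole]
  rfl

/-- The candidates for the weight-one entries of the left column of a tableau; the right column
is then `twos μ ∪ (ones μ \ A)`. -/
structure IsBallot (s k : ℕ) (μ : Fin N → ℕ) (A : Finset (Fin N)) : Prop where
  subset_ones : A ⊆ ones μ
  card_left : #(twos μ) + #A = s + k
  card_right : #(twos μ) + #(ones μ \ A) = s
  height_nonneg : ∀ t, 0 ≤ height A (ones μ \ A) t

end Weight

section Openers

variable {μ : Fin N → ℕ} {M : Finset (Fin N × Fin N)}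
  (harc : ∀ p ∈ M, p.1 < p.2 ∧ μ p.1 = 1 ∧ μ p.2 = 1)
  (hdisj : ∀ p ∈ M, ∀ q ∈ M, p ≠ q →
    p.1 ≠ q.1 ∧ p.1 ≠ q.2 ∧ p.2 ≠ q.1 ∧ p.2 ≠ q.2)
  (hcross : ∀ p ∈ M, ∀ q ∈ M, ¬(p.1 < q.1 ∧ q.1 < p.2 ∧ p.2 < q.2))
  (hnest : ∀ x : Fin N, μ x = 1 → (∀ p ∈ M, p.1 ≠ x ∧ p.2 ≠ x) →
    ∀ p ∈ M, ¬(p.1 < x ∧ x < p.2))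

/-- The left ends of the arcs together with the platform points. -/
def openers (μ : Fin N → ℕ) (M : Finset (Fin N × Fin N)) : Finset (Fin N) :=
  (ones μ).filter fun x => ∀ p ∈ M, p.2 ≠ x

include hdisj in
lemma fst_injOn_of_disjoint_arcs : Set.InjOn Prod.fst (M : Set (Fin N × Fin N)) :=
  fun p hp q hq h => by_contra fun hpq => (hdisj p hp q hq hpq).1 h

include hdisj in
lemma snd_injOn_of_disjoint_arcs : Set.InjOn Prod.snd (M : Set (Fin N × Fin N)) :=
  fun p hp q hq h => by_contra fun hpq => (hdisj p hp q hq hpq).2.2.2 h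

include harc in
lemma ones_sdiff_openers : ones μ \ openers μ M = M.image Prod.snd := by
  ext x
  simp only [openers, mem_sdiff, mem_filter, mem_image, not_and, not_forall, not_not,
    exists_prop]
  constructor
  · rintro ⟨hx, h⟩
    exact h hx
  · rintro ⟨p, hp, rfl⟩
    exact ⟨mem_ones.2 (harc p hp).2.2, fun _ => ⟨p, hp, rfl⟩⟩

include harc hdisj in
lemma image_fst_subset_openers : M.image Prod.fst ⊆ openers μ M := by
  intro x hx
  obtain ⟨p, hp, rfl⟩ := mem_image.1 hx
  refine mem_filter.2 ⟨mem_ones.2 (harc p hp).2.1, fun q hq hqp => ?_⟩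
  rcases eq_or_ne q p with rfl | hne
  · exact (harc q hq).1.ne' hqp
  · exact (hdisj q hq p hp hne).2.2.1 hqp

include hnest in
lemma mem_image_fst_of_mem_openers {q : Fin N × Fin N} (hq : q ∈ M) {x : Fin N}
    (hx : x ∈ openers μ M) (h1 : q.1 < x) (h2 : x < q.2) : x ∈ M.image Prod.fst := by
  obtain ⟨hx1, hx2⟩ := mem_filter.1 hx
  by_contra hfst
  exact hnest x (mem_ones.1 hx1)
    (fun p hp => ⟨fun h => hfst (mem_image.2 ⟨p, hp, h⟩), hx2 p hp⟩) q hq ⟨h1, h2⟩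

include hdisj hcross in
lemma fst_lt_fst_of_snd_mem_Ioo {p q : Fin N × Fin N} (hp : p ∈ M) (hq : q ∈ M)
    (h1 : q.1 < p.2) (h2 : p.2 < q.2) : q.1 < p.1 := by
  have hne : p ≠ q := by
    rintro rfl
    exact h2.ne rfl
  rcases lt_trichotomy p.1 q.1 with h | h | h
  · exact absurd ⟨h, h1, h2⟩ (hcross p hp q hq)
  · exact absurd h (hdisj p hp q hq hne).1
  · exact h

include hdisj hcross in
lemma snd_lt_snd_of_fst_mem_Ioo {p q : Fin N × Fin N} (hp : p ∈ M) (hq : q ∈ M)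
    (h1 : q.1 < p.1) (h2 : p.1 < q.2) : p.2 < q.2 := by
  have hne : p ≠ q := by
    rintro rfl
    exact h1.ne rfl
  rcases lt_trichotomy p.2 q.2 with h | h | h
  · exact h
  · exact absurd h (hdisj p hp q hq hne).2.2.2
  · exact absurd ⟨h1, h2, h⟩ (hcross q hq p hp)

include harc hdisj in
lemma countBelow_ones_sdiff_openers_le (t : ℕ) :
    countBelow (ones μ \ openers μ M) t ≤ countBelow (openers μ M) t := by
  rw [countBelow, countBelow, ones_sdiff_openers harc,
    card_filter_image_of_injOn (snd_injOn_of_disjoint_arcs hdisj)]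
  calc #{p ∈ M | p.2.val < t} ≤ #{p ∈ M | p.1.val < t} :=
        card_le_card fun p hp => by
          simp only [mem_filter] at hp ⊢
          exact ⟨hp.1, lt_trans (harc p hp.1).1 hp.2⟩
    _ = #{x ∈ M.image Prod.fst | x.val < t} :=
        (card_filter_image_of_injOn (fst_injOn_of_disjoint_arcs hdisj) (fun x => x.val < t)).symm
    _ ≤ #{x ∈ openers μ M | x.val < t} :=
        card_le_card (filter_subset_filter _ (image_fst_subset_openers harc hdisj))

include harc hdisj hcross in
/-- Arcs ending inside an arc also start inside it. -/
lemma card_closers_le_card_openers_of_le_snd {q : Fin N × Fin N} (hq : q ∈ M) {u : ℕ}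
    (hu : u ≤ q.2) :
    #{x ∈ ones μ \ openers μ M | (q.1 : ℕ) + 1 ≤ x.val ∧ x.val < u} ≤
      #{x ∈ openers μ M | (q.1 : ℕ) + 1 ≤ x.val ∧ x.val < u} := by
  rw [ones_sdiff_openers harc, card_filter_image_of_injOn (snd_injOn_of_disjoint_arcs hdisj)]
  calc #{p ∈ M | (q.1 : ℕ) + 1 ≤ p.2.val ∧ p.2.val < u}
        ≤ #{p ∈ M | (q.1 : ℕ) + 1 ≤ p.1.val ∧ p.1.val < u} :=
        card_le_card fun p hp => by
          simp only [mem_filter] at hp ⊢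
          obtain ⟨hpM, h1, h2⟩ := hp
          have h3 := fst_lt_fst_of_snd_mem_Ioo hdisj hcross hpM hq (Fin.lt_def.2 (by omega))
            (Fin.lt_def.2 (by omega))
          have h4 := (harc p hpM).1
          rw [Fin.lt_def] at h3 h4
          exact ⟨hpM, by omega, by omega⟩
    _ = #{x ∈ M.image Prod.fst | (q.1 : ℕ) + 1 ≤ x.val ∧ x.val < u} :=
        (card_filter_image_of_injOn (fst_injOn_of_disjoint_arcs hdisj)
          (fun x => (q.1 : ℕ) + 1 ≤ x.val ∧ x.val < u)).symm
    _ ≤ _ := card_le_card (filter_subset_filter _ (image_fst_subset_openers harc hdisj))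

include harc hdisj hcross hnest in
/-- Every point strictly inside an arc is an end of an arc nested in it. -/
lemma card_openers_le_card_closers_of_mem_arc {q : Fin N × Fin N} (hq : q ∈ M) :
    #{x ∈ openers μ M | (q.1 : ℕ) + 1 ≤ x.val ∧ x.val < (q.2 : ℕ)} ≤
      #{x ∈ ones μ \ openers μ M | (q.1 : ℕ) + 1 ≤ x.val ∧ x.val < (q.2 : ℕ)} := by
  rw [ones_sdiff_openers harc, card_filter_image_of_injOn (snd_injOn_of_disjoint_arcs hdisj)]
  calc #{x ∈ openers μ M | (q.1 : ℕ) + 1 ≤ x.val ∧ x.val < (q.2 : ℕ)}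
        ≤ #{x ∈ M.image Prod.fst | (q.1 : ℕ) + 1 ≤ x.val ∧ x.val < (q.2 : ℕ)} :=
        card_le_card fun x hx => by
          simp only [mem_filter] at hx ⊢
          obtain ⟨hxO, h1, h2⟩ := hx
          exact ⟨mem_image_fst_of_mem_openers hnest hq hxO (Fin.lt_def.2 h1) (Fin.lt_def.2 h2),
            h1, h2⟩
    _ = #{p ∈ M | (q.1 : ℕ) + 1 ≤ p.1.val ∧ p.1.val < (q.2 : ℕ)} :=
        card_filter_image_of_injOn (fst_injOn_of_disjoint_arcs hdisj) _
    _ ≤ #{p ∈ M | (q.1 : ℕ) + 1 ≤ p.2.val ∧ p.2.val < (q.2 : ℕ)} :=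
        card_le_card fun p hp => by
          simp only [mem_filter] at hp ⊢
          obtain ⟨hpM, h1, h2⟩ := hp
          have h3 :=
            snd_lt_snd_of_fst_mem_Ioo hdisj hcross hpM hq (Fin.lt_def.2 h1) (Fin.lt_def.2 h2)
          have h4 := (harc p hpM).1
          rw [Fin.lt_def] at h3 h4
          exact ⟨hpM, by omega, h3⟩

include harc hdisj in
lemma height_openers_nonneg (t : ℕ) : 0 ≤ height (openers μ M) (ones μ \ openers μ M) t :=
  sub_nonneg.2 (Nat.cast_le.2 (countBelow_ones_sdiff_openers_le harc hdisj t))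

include harc hdisj hcross in
lemma height_openers_fst_succ_le {q : Fin N × Fin N} (hq : q ∈ M) {t : ℕ} (h1 : q.1 < t)
    (h2 : t ≤ q.2) :
    height (openers μ M) (ones μ \ openers μ M) (q.1 + 1) ≤
      height (openers μ M) (ones μ \ openers μ M) t := by
  rw [height_add (show (q.1 : ℕ) + 1 ≤ t from h1)]
  have := card_closers_le_card_openers_of_le_snd harc hdisj hcross hq h2
  omega

include harc hdisj hcross hnest in
lemma height_openers_snd_succ {q : Fin N × Fin N} (hq : q ∈ M) :
    height (openers μ M) (ones μ \ openers μ M) (q.2 + 1) =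
      height (openers μ M) (ones μ \ openers μ M) (q.1 + 1) - 1 := by
  have hq2 : q.2 ∈ ones μ \ openers μ M := by
    rw [ones_sdiff_openers harc]
    exact mem_image_of_mem _ hq
  rw [height_succ_of_mem_right disjoint_sdiff hq2,
    height_add (show (q.1 : ℕ) + 1 ≤ q.2 from (harc q hq).1)]
  have := card_closers_le_card_openers_of_le_snd harc hdisj hcross hq le_rfl
  have := card_openers_le_card_closers_of_mem_arc harc hdisj hcross hnest hq
  omega

include harc hdisj hcross hnest in
lemma walkMatching_openers : walkMatching (openers μ M) (ones μ \ openers μ M) = M := by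
  have hsub : M ⊆ walkMatching (openers μ M) (ones μ \ openers μ M) := fun q hq =>
    mem_walkMatching.2 ⟨image_fst_subset_openers harc hdisj (mem_image_of_mem _ hq),
      ones_sdiff_openers harc ▸ mem_image_of_mem _ hq, (harc q hq).1,
      height_openers_snd_succ harc hdisj hcross hnest hq,
      fun t h1 h2 => height_openers_fst_succ_le harc hdisj hcross hq h1 h2⟩
  refine (eq_of_subset_of_card_le hsub ?_).symm
  rw [card_walkMatching disjoint_sdiff (height_openers_nonneg harc hdisj),
    ones_sdiff_openers harc, card_image_of_injOn (snd_injOn_of_disjoint_arcs hdisj)]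

include harc hdisj in
lemma isBallot_openers {s k : ℕ} (hμ : ∀ i, μ i ≤ 2) (hsum : ∑ i, μ i = 2 * s + k)
    (hcard : #(ones μ) = 2 * #M + k) : IsBallot s k μ (openers μ M) := by
  have hclosers : #(ones μ \ openers μ M) = #M := by
    rw [ones_sdiff_openers harc, card_image_of_injOn (snd_injOn_of_disjoint_arcs hdisj)]
  have hsub : openers μ M ⊆ ones μ := filter_subset _ _
  have := card_sdiff_add_card_eq_card hsub
  have := sum_eq_two_mul_card_twos_add_card_ones hμ
  exact ⟨hsub, by omega, by omega, height_openers_nonneg harc hdisj⟩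

end Openers

section BallotMatching

variable {s k : ℕ} {μ : Fin N → ℕ} {A : Finset (Fin N)}

lemma IsBallot.card_walkMatching (hA : IsBallot s k μ A) :
    #(walkMatching A (ones μ \ A)) = #(ones μ \ A) :=
  SSYTMatching.card_walkMatching disjoint_sdiff hA.height_nonneg

/-- The unmatched up-steps are the platform points. -/
noncomputable def IsBallot.toPlatformMatching (hA : IsBallot s k μ A) :
    PlatformMatchings N k μ := by
  refine ⟨walkMatching A (ones μ \ A), fun p hp => ?_, fun p hp q hq hpq => ?_,
    fun p hp q hq => not_crossing_of_mem_walkMatching hp hq, ?_, fun x hx hfree => ?_⟩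
  · obtain ⟨hp1, hp2, hlt, -⟩ := mem_walkMatching.1 hp
    exact ⟨hlt, mem_ones.1 (hA.subset_ones hp1), mem_ones.1 (mem_sdiff.1 hp2).1⟩
  · obtain ⟨hp1, hp2, -⟩ := mem_walkMatching.1 hp
    obtain ⟨hq1, hq2, -⟩ := mem_walkMatching.1 hq
    exact ⟨fun h => hpq (walkMatching_fst_injOn hp hq h),
      fun h => disjoint_left.1 disjoint_sdiff hp1 (h ▸ hq2),
      fun h => disjoint_left.1 disjoint_sdiff hq1 (h ▸ hp2),
      fun h => hpq (walkMatching_snd_injOn disjoint_sdiff hp hq h)⟩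
  · have := card_sdiff_add_card_eq_card hA.subset_ones
    have := hA.card_left
    have := hA.card_right
    change #(ones μ) = _
    rw [hA.card_walkMatching]
    omega
  · refine not_lt_lt_of_unmatched disjoint_sdiff hA.height_nonneg ?_ hfree
    rw [union_sdiff_of_subset hA.subset_ones]
    exact mem_ones.2 hx

lemma IsBallot.openers_walkMatching (hA : IsBallot s k μ A) :
    openers μ (walkMatching A (ones μ \ A)) = A := by
  ext x
  simp only [openers, mem_filter]
  constructor
  · rintro ⟨hx, hfree⟩
    by_contra hxA
    obtain ⟨p, hp, rfl⟩ := exists_mem_walkMatching_snd_eq disjoint_sdiff hA.height_nonneg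
      (mem_sdiff.2 ⟨hx, hxA⟩)
    exact hfree p hp rfl
  · intro hxA
    refine ⟨hA.subset_ones hxA, fun p hp h => ?_⟩
    exact disjoint_left.1 disjoint_sdiff hxA (h ▸ (mem_walkMatching.1 hp).2.1)

end BallotMatching

noncomputable def ballotEquivPlatformMatchings {s k : ℕ} {μ : Fin N → ℕ}
    (hμ : ∀ i, μ i ≤ 2) (hsum : ∑ i, μ i = 2 * s + k) :
    {A : Finset (Fin N) // IsBallot s k μ A} ≃ PlatformMatchings N k μ where
  toFun A := A.2.toPlatformMatching
  invFun M := ⟨openers μ M.1, isBallot_openers M.2.1 M.2.2.1 hμ hsum M.2.2.2.2.1⟩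
  left_inv A := Subtype.ext A.2.openers_walkMatching
  right_inv M := Subtype.ext (walkMatching_openers M.2.1 M.2.2.1 M.2.2.2.1 M.2.2.2.2.2)

section Columns

variable {m n : ℕ}

lemma countBelow_image {f : Fin n → Fin N} (hf : Function.Injective f) (t : ℕ) :
    countBelow (univ.image f) t = #{j | (f j).val < t} :=
  card_filter_image_of_injOn hf.injOn _

lemma forall_castLE_le_iff_countBelow_le (hmn : m ≤ n) {f : Fin n → Fin N} {g : Fin m → Fin N}
    (hf : StrictMono f) (hg : StrictMono g) :
    (∀ i, f (Fin.castLE hmn i) ≤ g i) ↔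
      ∀ t, countBelow (univ.image g) t ≤ countBelow (univ.image f) t := by
  simp only [countBelow_image hf.injective, countBelow_image hg.injective]
  refine ⟨fun hrow t => card_le_card_of_injOn (Fin.castLE hmn) (fun j hj => ?_)
    (Fin.castLE_injective hmn).injOn, fun hpre i => ?_⟩
  · simp only [coe_filter, mem_univ, true_and, Set.mem_ofPred_eq] at hj ⊢
    exact lt_of_le_of_lt (Fin.le_def.1 (hrow j)) hj
  · by_contra! hlt
    have hg_count : (i : ℕ) + 1 ≤ #{j | (g j).val < (g i).val + 1} :=
      calc (i : ℕ) + 1 = #(Iic i) := (Fin.card_Iic i).symm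
        _ ≤ _ := card_le_card fun j hj => by
          simp only [mem_filter, mem_univ, true_and]
          exact Nat.lt_succ_of_le (Fin.le_def.1 (hg.monotone (mem_Iic.1 hj)))
    have hf_count : #{j | (f j).val < (g i).val + 1} ≤ i :=
      calc _ ≤ #(Iio (Fin.castLE hmn i)) := card_le_card fun j hj => by
            simp only [mem_filter, mem_univ, true_and] at hj
            exact mem_Iio.2 (hf.lt_iff_lt.1
              (lt_of_le_of_lt (Fin.le_def.2 (Nat.lt_succ_iff.1 hj)) hlt))
        _ = i := Fin.card_Iio _
    have := hpre ((g i : ℕ) + 1)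
    omega

end Columns

section Content

variable {μ : Fin N → ℕ}

lemma eq_twos_union_of_content {L R : Finset (Fin N)}
    (hc : ∀ v, (if v ∈ L then 1 else 0) + (if v ∈ R then 1 else 0) = μ v) :
    L \ R ⊆ ones μ ∧ L = twos μ ∪ (L \ R) ∧ R = twos μ ∪ (ones μ \ (L \ R)) := by
  refine ⟨fun v hv => ?_, ?_, ?_⟩
  · have := hc v
    simp_all
  all_goals
    ext v
    have := hc v
    by_cases hL : v ∈ L <;> by_cases hR : v ∈ R <;> simp [hL, hR] at this ⊢ <;> omega

lemma content_twos_union (hμ : ∀ i, μ i ≤ 2) {A : Finset (Fin N)} (hA : A ⊆ ones μ)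
    (v : Fin N) :
    (if v ∈ twos μ ∪ A then 1 else 0) + (if v ∈ twos μ ∪ (ones μ \ A) then 1 else 0) =
      μ v := by
  have := hμ v
  by_cases hv : v ∈ A
  · have := mem_ones.1 (hA hv)
    simp [hv, this]
  · simp only [mem_union, mem_twos, hv, or_false, mem_sdiff, mem_ones, not_false_eq_true,
      and_true]
    split_ifs <;> omega

end Content

section Tableaux

variable {s k : ℕ} {μ : Fin N → ℕ}

/-- The weight-one entries of the left column of a tableau. -/
def leftOnly (T : SSYT N s k μ) : Finset (Fin N) := univ.image T.1.1 \ univ.image T.1.2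

lemma image_columns_content (T : SSYT N s k μ) (v : Fin N) :
    (if v ∈ univ.image T.1.1 then 1 else 0) + (if v ∈ univ.image T.1.2 then 1 else 0) =
      μ v := by
  rw [← card_filter_apply_eq_of_injective T.2.1.injective,
    ← card_filter_apply_eq_of_injective T.2.2.1.injective]
  exact T.2.2.2.2 v

lemma image_columns_eq (T : SSYT N s k μ) :
    leftOnly T ⊆ ones μ ∧ univ.image T.1.1 = twos μ ∪ leftOnly T ∧
      univ.image T.1.2 = twos μ ∪ (ones μ \ leftOnly T) :=
  eq_twos_union_of_content (image_columns_content T)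

lemma isBallot_leftOnly (T : SSYT N s k μ) : IsBallot s k μ (leftOnly T) := by
  obtain ⟨hsub, hL, hR⟩ := image_columns_eq T
  have hdL := disjoint_twos_of_subset_ones hsub
  have hdR := disjoint_twos_of_subset_ones (sdiff_subset (s := ones μ) (t := leftOnly T))
  refine ⟨hsub, ?_, ?_, fun t => ?_⟩
  · rw [← card_union_of_disjoint hdL, ← hL, card_image_of_injective _ T.2.1.injective]
    simp
  · rw [← card_union_of_disjoint hdR, ← hR, card_image_of_injective _ T.2.2.1.injective]
    simp
  · have := (forall_castLE_le_iff_countBelow_le _ T.2.1 T.2.2.1).1 T.2.2.2.1 t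
    rw [hL, hR, countBelow_union hdL, countBelow_union hdR] at this
    exact sub_nonneg.2 (Nat.cast_le.2 (by omega))

variable {A : Finset (Fin N)}

lemma IsBallot.card_twos_union (hA : IsBallot s k μ A) : #(twos μ ∪ A) = s + k := by
  rw [card_union_of_disjoint (disjoint_twos_of_subset_ones hA.subset_ones), hA.card_left]

lemma IsBallot.card_twos_union_sdiff (hA : IsBallot s k μ A) :
    #(twos μ ∪ (ones μ \ A)) = s := by
  rw [card_union_of_disjoint (disjoint_twos_of_subset_ones sdiff_subset), hA.card_right]

noncomputable def IsBallot.toSSYT (hA : IsBallot s k μ A) (hμ : ∀ i, μ i ≤ 2) :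
    SSYT N s k μ := by
  refine ⟨((twos μ ∪ A).orderEmbOfFin hA.card_twos_union,
    (twos μ ∪ (ones μ \ A)).orderEmbOfFin hA.card_twos_union_sdiff),
    OrderEmbedding.strictMono _, OrderEmbedding.strictMono _, ?_, fun v => ?_⟩
  · refine (forall_castLE_le_iff_countBelow_le _ (OrderEmbedding.strictMono _)
      (OrderEmbedding.strictMono _)).2 fun t => ?_
    rw [image_orderEmbOfFin_univ, image_orderEmbOfFin_univ,
      countBelow_union (disjoint_twos_of_subset_ones hA.subset_ones),
      countBelow_union (disjoint_twos_of_subset_ones sdiff_subset)]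
    have := hA.height_nonneg t
    rw [height, sub_nonneg, Nat.cast_le] at this
    omega
  · rw [card_filter_apply_eq_of_injective (OrderEmbedding.strictMono _).injective,
      card_filter_apply_eq_of_injective (OrderEmbedding.strictMono _).injective,
      image_orderEmbOfFin_univ, image_orderEmbOfFin_univ]
    exact content_twos_union hμ hA.subset_ones v

lemma IsBallot.leftOnly_toSSYT (hA : IsBallot s k μ A) (hμ : ∀ i, μ i ≤ 2) :
    leftOnly (hA.toSSYT hμ) = A := by
  ext v
  simp only [leftOnly, IsBallot.toSSYT, image_orderEmbOfFin_univ, mem_sdiff, mem_union,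
    mem_twos, mem_ones]
  constructor
  · rintro ⟨h | h, hv⟩
    · exact absurd (Or.inl h) hv
    · exact h
  · intro hv
    have := mem_ones.1 (hA.subset_ones hv)
    refine ⟨Or.inr hv, ?_⟩
    rintro (h | ⟨-, h⟩) <;> simp_all

lemma toSSYT_isBallot_leftOnly (T : SSYT N s k μ) (hμ : ∀ i, μ i ≤ 2) :
    (isBallot_leftOnly T).toSSYT hμ = T := by
  obtain ⟨-, hL, hR⟩ := image_columns_eq T
  refine Subtype.ext (Prod.ext ?_ ?_)
  · exact (orderEmbOfFin_unique _ (fun j => hL ▸ mem_image_of_mem _ (mem_univ j)) T.2.1).symm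
  · exact (orderEmbOfFin_unique _ (fun j => hR ▸ mem_image_of_mem _ (mem_univ j)) T.2.2.1).symm

noncomputable def ssytEquivBallot (hμ : ∀ i, μ i ≤ 2) :
    SSYT N s k μ ≃ {A : Finset (Fin N) // IsBallot s k μ A} where
  toFun T := ⟨leftOnly T, isBallot_leftOnly T⟩
  invFun A := A.2.toSSYT hμ
  left_inv T := toSSYT_isBallot_leftOnly T hμ
  right_inv A := Subtype.ext (A.2.leftOnly_toSSYT hμ)

end Tableaux

end SSYTMatching

theorem stmt16_general (N s k : ℕ) (μ : Fin N → ℕ) (hμ : ∀ i, μ i ≤ 2)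
    (hsum : ∑ i, μ i = 2 * s + k) :
    Nonempty (SSYT N s k μ ≃ PlatformMatchings N k μ) ∧
      Nat.card (SSYT N s k μ) = Nat.card (PlatformMatchings N k μ) := by
  let e := (SSYTMatching.ssytEquivBallot hμ).trans
    (SSYTMatching.ballotEquivPlatformMatchings hμ hsum)
  exact ⟨⟨e⟩, Nat.card_congr e⟩

/-- For an admissible weight `μ` (entries in `{0,1,2}`, total `2s+k`, and
dominance partial-sum conditions), the semi-standard tableaux of shape
`λ = ω_s + ω_{s+k}` and content `μ` are in explicit bijection with the
crossingless matchings of the `m(μ)` points `{i : μ i = 1}` with one platform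
of `k` points; in particular the two sets have the same cardinality. -/
theorem stmt16 (N s k : ℕ) (μ : Fin N → ℕ) (hμ : ∀ i, μ i ≤ 2)
    (hsum : ∑ i, μ i = 2 * s + k)
    (hdom : ∀ t : ℕ,
      ∑ i ∈ Finset.univ.filter (fun i : Fin N => (i : ℕ) < t), μ i ≤
        min t s + min t (s + k)) :
    Nonempty (SSYT N s k μ ≃ PlatformMatchings N k μ) ∧
      Nat.card (SSYT N s k μ) = Nat.card (PlatformMatchings N k μ) :=
  stmt16_general N s k μ hμ hsum
end
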